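/- arXiv:1410.2051 — 5 statements merged into one kernel-verified Lean document; each statement's English description precedes it below -/
import Mathlib

section
/- A topological space X is locally Hausdorff (every point has a Hausdorff neighbourhood) if and only if the diagonal {(x,x) : x ∈ X} is a locally closed subset of X × X. -/
open Set Topology Set.Notation

/-- A topological space is locally Hausdorff if every point has a
neighbourhood which is Hausdorff in the subspace topology. -/
def LocallyHausdorff (X : Type*) [TopologicalSpace X] : Prop :=
  ∀ x : X, ∃ s : Set X, s ∈ nhds x ∧ T2Space s

theorem locallyHausdorff_iff_isLocallyClosed_diagonal
    (X : Type*) [TopologicalSpace X] :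
    LocallyHausdorff X ↔ IsLocallyClosed (Set.diagonal X) := by
  have htfae := (isLocallyClosed_tfae (Set.diagonal X)).out 0 2
  rw [htfae]
  constructor
  · intro h p hp
    obtain ⟨s, hs, hT2⟩ := h p.1
    refine ⟨s ×ˢ s, ?_, ?_⟩
    · rw [mem_nhds_prod_iff]
      exact ⟨s, hs, s, hp ▸ hs, Set.Subset.rfl⟩
    · have hcont : Continuous (fun q : ↥(s ×ˢ s) =>
        ((⟨q.1.1, q.2.1⟩ : s), (⟨q.1.2, q.2.2⟩ : s))) := by
        fun_prop
      have : ((s ×ˢ s) ↓∩ Set.diagonal X) =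
          (fun q : ↥(s ×ˢ s) => ((⟨q.1.1, q.2.1⟩ : s), (⟨q.1.2, q.2.2⟩ : s)))
            ⁻¹' (Set.diagonal s) := by
        ext q
        simp [Set.diagonal, Subtype.ext_iff]
      rw [this]
      exact isClosed_diagonal.preimage hcont
  · intro h x
    obtain ⟨U, hU, hUc⟩ := h (x, x) rfl
    rw [mem_nhds_prod_iff] at hU
    obtain ⟨V, hV, W, hW, hVW⟩ := hU
    refine ⟨V ∩ W, Filter.inter_mem hV hW, ?_⟩
    rw [t2_iff_isClosed_diagonal]
    have hcont : Continuous (fun q : ↥(V ∩ W) × ↥(V ∩ W) =>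
        (⟨((q.1 : X), (q.2 : X)), hVW ⟨q.1.2.1, q.2.2.2⟩⟩ : U)) := by
      fun_prop
    have : Set.diagonal ↥(V ∩ W) =
        (fun q : ↥(V ∩ W) × ↥(V ∩ W) =>
          (⟨((q.1 : X), (q.2 : X)), hVW ⟨q.1.2.1, q.2.2.2⟩⟩ : U))
          ⁻¹' (U ↓∩ Set.diagonal X) := by
      ext q
      simp [Set.diagonal, Subtype.ext_iff]
    rw [this]
    exact hUc.preimage hcont
end

section
/- Let f : X → Z be a continuous open surjection between topological spaces. Then the equivalence relation R = {(x,y) ∈ X × X : f x = f y} is a locally closed subset of X × X if and only if Z is locally Hausdorff. -/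
theorem isLocallyClosed_ker_iff_locallyHausdorff
    {X Z : Type*} [TopologicalSpace X] [TopologicalSpace Z]
    (f : X → Z) (hf : Continuous f) (hopen : IsOpenMap f)
    (hsurj : Function.Surjective f) :
    IsLocallyClosed {p : X × X | f p.1 = f p.2} ↔ LocallyHausdorff Z := by
  set R : Set (X × X) := {p : X × X | f p.1 = f p.2} with hR
  have key := (isLocallyClosed_tfae R).out 0 2
  rw [key]
  constructor
  · intro H z
    obtain ⟨x, rfl⟩ := hsurj z
    obtain ⟨U, hU, hUc⟩ := H (x, x) rfl
    -- find open V with x ∈ V and V ×ˢ V ⊆ U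
    rw [nhds_prod_eq, Filter.mem_prod_iff] at hU
    obtain ⟨A, hA, B, hB, hAB⟩ := hU
    obtain ⟨V, hVsub, hVopen, hxV⟩ := mem_nhds_iff.mp (Filter.inter_mem hA hB)
    have hVU : V ×ˢ V ⊆ U := fun p hp =>
      hAB ⟨(hVsub hp.1).1, (hVsub hp.2).2⟩
    refine ⟨f '' V, (hopen V hVopen).mem_nhds ⟨x, hxV, rfl⟩, ?_⟩
    -- complement of R in U is open in subspace U, extract open W
    obtain ⟨W, hWopen, hW⟩ := isOpen_induced_iff.mp hUc.isOpen_compl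
    constructor
    rintro ⟨z1, hz1⟩ ⟨z2, hz2⟩ hne
    obtain ⟨a, haV, rfl⟩ := hz1
    obtain ⟨b, hbV, rfl⟩ := hz2
    have hab : f a ≠ f b := fun h => hne (Subtype.ext h)
    have habW : (a, b) ∈ W ∩ V ×ˢ V := by
      refine ⟨?_, haV, hbV⟩
      have : (⟨(a, b), hVU ⟨haV, hbV⟩⟩ : U) ∈ Subtype.val ⁻¹' W := by
        rw [hW]; exact hab
      exact this
    obtain ⟨P, Q, hP, hQ, haP, hbQ, hPQ⟩ :=
      isOpen_prod_iff.mp (hWopen.inter (hVopen.prod hVopen)) a b habW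
    refine ⟨Subtype.val ⁻¹' (f '' (P ∩ V)), Subtype.val ⁻¹' (f '' (Q ∩ V)),
      continuous_subtype_val.isOpen_preimage _ (hopen _ (hP.inter hVopen)),
      continuous_subtype_val.isOpen_preimage _ (hopen _ (hQ.inter hVopen)),
      ⟨a, ⟨haP, haV⟩, rfl⟩, ⟨b, ⟨hbQ, hbV⟩, rfl⟩, ?_⟩
    rw [Set.disjoint_left]
    rintro ⟨w, hw⟩ ⟨a', ha', ha'w⟩ ⟨b', hb', hb'w⟩
    have : (a', b') ∈ W ∩ V ×ˢ V := hPQ ⟨ha'.1, hb'.1⟩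
    have hmem : (⟨(a', b'), hVU ⟨ha'.2, hb'.2⟩⟩ : U) ∈ Subtype.val ⁻¹' W := this.1
    rw [hW] at hmem
    exact hmem (ha'w.trans hb'w.symm)
  · intro H p hp
    obtain ⟨s, hs, hs2⟩ := H (f p.1)
    have hs' : s ∈ nhds (f p.2) := hp ▸ hs
    refine ⟨(f ⁻¹' s) ×ˢ (f ⁻¹' s), ?_, ?_⟩
    · rw [nhds_prod_eq]
      exact Filter.prod_mem_prod (hf.continuousAt.preimage_mem_nhds hs)
        (hf.continuousAt.preimage_mem_nhds hs')
    · have h1 : Continuous fun q : ((f ⁻¹' s) ×ˢ (f ⁻¹' s) : Set (X × X)) =>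
          (⟨f q.1.1, q.2.1⟩ : s) :=
        Continuous.subtype_mk (hf.comp (continuous_fst.comp continuous_subtype_val)) _
      have h2 : Continuous fun q : ((f ⁻¹' s) ×ˢ (f ⁻¹' s) : Set (X × X)) =>
          (⟨f q.1.2, q.2.2⟩ : s) :=
        Continuous.subtype_mk (hf.comp (continuous_snd.comp continuous_subtype_val)) _
      have := isClosed_eq h1 h2
      convert this using 1
      ext q
      simp [Subtype.ext_iff, R]
end

section
/- Let X be a locally Hausdorff, locally quasi-compact topological space (every point has a neighbourhood basis of quasi-compact sets and a Hausdorff neighbourhood). A subset S ⊆ X is locally quasi-compact in the subspace topology if and only if S is locally closed in X. -/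
open Set Topology

theorem locallyCompact_subspace_iff_isLocallyClosed
    {X : Type*} [TopologicalSpace X] [LocallyCompactSpace X]
    (hX : LocallyHausdorff X) (S : Set X) :
    LocallyCompactSpace S ↔ IsLocallyClosed S := by
  constructor
  · intro hS
    refine ((isLocallyClosed_tfae S).out 0 2).mpr ?_
    intro x hx
    obtain ⟨H, hH, hT2⟩ := hX x
    -- a compact neighbourhood of x in S, contained in H
    have hHS : ((↑) : S → X) ⁻¹' H ∈ 𝓝 (⟨x, hx⟩ : S) := by
      rw [nhds_subtype]
      exact Filter.preimage_mem_comap hH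
    obtain ⟨K', hK'n, hK'sub, hK'c⟩ := local_compact_nhds hHS
    set K : Set X := (↑) '' K' with hK
    have hKc : IsCompact K := hK'c.image continuous_subtype_val
    have hKH : K ⊆ H := by
      rintro _ ⟨y, hy, rfl⟩
      exact hK'sub hy
    have hKS : K ⊆ S := by rintro _ ⟨y, hy, rfl⟩; exact y.2
    -- K is closed in H since H is Hausdorff
    have hclK : closure K ∩ H ⊆ K := by
      intro y ⟨hyc, hyH⟩
      have hKpre : IsCompact (((↑) : H → X) ⁻¹' K) :=
        IsInducing.subtypeVal.isCompact_preimage' hKc (by rwa [Subtype.range_val])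
      have hKcl : IsClosed (((↑) : H → X) ⁻¹' K) := hKpre.isClosed
      rw [isClosed_preimage_val] at hKcl
      rw [inter_eq_self_of_subset_right hKH] at hKcl
      exact hKcl ⟨hyH, hyc⟩
    -- extract open V from the neighbourhood K' of x in S
    obtain ⟨V, hVK, hVo, hxV⟩ := mem_nhds_iff.mp hK'n
    obtain ⟨W, hWo, hWeq⟩ := isOpen_induced_iff.mp hVo
    refine ⟨interior H ∩ W, Filter.inter_mem (interior_mem_nhds.mpr hH) ?_, ?_⟩
    · refine hWo.mem_nhds ?_
      have : (⟨x, hx⟩ : S) ∈ V := hxV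
      rw [← hWeq] at this; exact this
    · rw [isClosed_preimage_val]
      intro y ⟨⟨hyH, hyW⟩, hyc⟩
      have hsub : (interior H ∩ W) ∩ S ⊆ K := by
        rintro z ⟨⟨-, hzW⟩, hzS⟩
        have : (⟨z, hzS⟩ : S) ∈ V := by rw [← hWeq]; exact hzW
        exact ⟨⟨z, hzS⟩, hVK this, rfl⟩
      have : y ∈ closure K := closure_mono hsub hyc
      exact hKS (hclK ⟨this, interior_subset hyH⟩)
  · exact fun h => h.locallyCompactSpace
end

section
/- Let f : X → Z be a continuous open surjection, where X is locally Hausdorff and locally quasi-compact, and suppose the set {(x,y) ∈ X × X : f x = f y} is locally closed in X × X. Then Z is locally Hausdorff and locally quasi-compact. -/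
theorem quotient_locallyHausdorff_locallyCompact
    {X Z : Type*} [TopologicalSpace X] [TopologicalSpace Z]
    [LocallyCompactSpace X] (hX : LocallyHausdorff X)
    (f : X → Z) (hf : Continuous f) (hopen : IsOpenMap f)
    (hsurj : Function.Surjective f)
    (hker : IsLocallyClosed {p : X × X | f p.1 = f p.2}) :
    LocallyHausdorff Z ∧ LocallyCompactSpace Z := by
  constructor
  · intro z
    obtain ⟨x, rfl⟩ := hsurj z
    obtain ⟨U, C, hU, hC, hUC⟩ := hker
    have hxx : (x, x) ∈ U := by
      have hx : (x, x) ∈ {p : X × X | f p.1 = f p.2} := rfl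
      rw [hUC] at hx
      exact hx.1
    obtain ⟨u, v, hu, hv, hxu, hxv, huv⟩ := (isOpen_prod_iff.mp hU) x x hxx
    refine ⟨f '' (u ∩ v), (hopen _ (hu.inter hv)).mem_nhds ⟨x, ⟨hxu, hxv⟩, rfl⟩, ?_⟩
    set V := u ∩ v with hV
    constructor
    intro a b hab
    obtain ⟨v1, hv1, hfv1⟩ := a.2
    obtain ⟨v2, hv2, hfv2⟩ := b.2
    have hne : f v1 ≠ f v2 := by
      intro h
      exact hab (Subtype.ext (by rw [← hfv1, ← hfv2, h]))
    have hinU : (v1, v2) ∈ U := huv ⟨hv1.1, hv2.2⟩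
    have hnotC : (v1, v2) ∈ Cᶜ := by
      intro hmem
      exact hne (by have : (v1, v2) ∈ {p : X × X | f p.1 = f p.2} := hUC ▸ ⟨hinU, hmem⟩
                    exact this)
    obtain ⟨A, B, hA, hB, hv1A, hv2B, hAB⟩ :=
      (isOpen_prod_iff.mp hC.isOpen_compl) v1 v2 hnotC
    refine ⟨Subtype.val ⁻¹' (f '' (A ∩ V)), Subtype.val ⁻¹' (f '' (B ∩ V)), ?_, ?_, ?_, ?_, ?_⟩
    · exact (hopen _ (hA.inter (hu.inter hv))).preimage continuous_subtype_val
    · exact (hopen _ (hB.inter (hu.inter hv))).preimage continuous_subtype_val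
    · exact ⟨v1, ⟨hv1A, hv1⟩, hfv1⟩
    · exact ⟨v2, ⟨hv2B, hv2⟩, hfv2⟩
    · rw [Set.disjoint_left]
      rintro c ⟨p, hp, hpc⟩ ⟨q, hq, hqc⟩
      have hfpq : f p = f q := by rw [hpc, hqc]
      have hR : (p, q) ∈ U ∩ C := by rw [← hUC]; exact hfpq
      exact hAB ⟨hp.1, hq.1⟩ hR.2
  · exact IsOpenQuotientMap.locallyCompactSpace ⟨hsurj, hf, hopen⟩
end

section
/- Let X and Y be topological spaces with Y sober. Suppose F : Opens(Y) → Opens(X) is a map on open-set lattices that preserves finite infima (including the top element) and arbitrary suprema. Then there is a unique continuous map f : X → Y with F(U) = f⁻¹(U) for all open U ⊆ Y. -/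
/-!
A frame homomorphism `F : Opens Y → Opens X` turns each point `x` of `X` into a point of the
locale `Opens Y`, namely the frame homomorphism `U ↦ (x ∈ F U)` to `Prop`. In a sober space
every such point is of the form `U ↦ (y ∈ U)` for a unique `y`: the complement of the largest
open set on which it is false is an irreducible closed set, and `y` is its generic point.
Sending `x` to this `y` gives the continuous map, and `T0` makes it unique.
-/

open TopologicalSpace Locale

section LocalePoints

variable {Y : Type*} [TopologicalSpace Y]

theorem localePointOfSpacePoint_injective [T0Space Y] :
    Function.Injective (localePointOfSpacePoint Y) := fun _ _ h =>
  (inseparable_iff_forall_isOpen.2 fun U hU => Iff.of_eq (DFunLike.congr_fun h ⟨U, hU⟩)).eq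

theorem localePointOfSpacePoint_surjective [QuasiSober Y] :
    Function.Surjective (localePointOfSpacePoint Y) := by
  intro p
  set V : Opens Y := sSup {U | ¬ p U}
  have hV : ¬ p V := by
    simp only [V, map_sSup, sSup_Prop_eq]
    rintro ⟨_, ⟨U, hU, rfl⟩, hpU⟩
    exact hU hpU
  have meets_iff : ∀ U : Opens Y, ((V : Set Y)ᶜ ∩ U).Nonempty ↔ p U := by
    refine fun U => ⟨fun ⟨y, hyV, hyU⟩ => ?_, fun hU => ?_⟩
    · exact by_contra fun hU => hyV (le_sSup (α := Opens Y) hU hyU)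
    by_contra h
    have hUV : U ≤ V := fun y hyU => by_contra fun hyV => h ⟨y, hyV, hyU⟩
    exact hV (OrderHomClass.mono p hUV hU)
  have hirr : IsIrreducible (V : Set Y)ᶜ := by
    refine ⟨by simpa using (meets_iff ⊤).2 (map_top p ▸ trivial), fun u v hu hv hpu hpv => ?_⟩
    refine (meets_iff (⟨u, hu⟩ ⊓ ⟨v, hv⟩)).2 ?_
    rw [map_inf]
    exact ⟨(meets_iff ⟨u, hu⟩).1 hpu, (meets_iff ⟨v, hv⟩).1 hpv⟩
  obtain ⟨y, hy⟩ := QuasiSober.sober hirr V.isOpen.isClosed_compl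
  exact ⟨y, FrameHom.ext fun U => propext <| (hy.mem_open_set_iff U.isOpen).trans (meets_iff U)⟩

theorem forall_coe_eq_preimage_iff {X : Type*} [TopologicalSpace X]
    (Φ : FrameHom (Opens Y) (Opens X)) (f : X → Y) :
    (∀ U : Opens Y, (Φ U : Set X) = f ⁻¹' U) ↔
      ∀ x, localePointOfSpacePoint Y (f x) = (localePointOfSpacePoint X x).comp Φ :=
  ⟨fun h x => FrameHom.ext fun U => propext (Set.ext_iff.1 (h U) x).symm,
    fun h U => Set.ext fun x => Iff.of_eq (DFunLike.congr_fun (h x) U).symm⟩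

end LocalePoints

theorem exists_unique_continuous_map_of_frame_hom
    {X Y : Type*} [TopologicalSpace X] [TopologicalSpace Y]
    [QuasiSober Y] [T0Space Y]
    (F : Opens Y → Opens X)
    (htop : F ⊤ = ⊤)
    (hinf : ∀ U V : Opens Y, F (U ⊓ V) = F U ⊓ F V)
    (hsup : ∀ s : Set (Opens Y), F (sSup s) = sSup (F '' s)) :
    ∃! f : X → Y, Continuous f ∧ ∀ U : Opens Y, (F U : Set X) = f ⁻¹' (U : Set Y) := by
  let Φ : FrameHom (Opens Y) (Opens X) :=
    { toFun := F, map_inf' := hinf, map_top' := htop, map_sSup' := hsup }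
  choose f hf using fun x =>
    localePointOfSpacePoint_surjective ((localePointOfSpacePoint X x).comp Φ)
  have hfΦ := (forall_coe_eq_preimage_iff Φ f).2 hf
  refine ⟨f, ⟨continuous_def.2 fun u hu => hfΦ ⟨u, hu⟩ ▸ (Φ ⟨u, hu⟩).isOpen, hfΦ⟩, ?_⟩
  rintro g ⟨-, hgΦ⟩
  exact funext fun x => localePointOfSpacePoint_injective <|
    ((forall_coe_eq_preimage_iff Φ g).1 hgΦ x).trans (hf x).symm
end
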